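/- arXiv:1303.0572 — 3 statements merged into one kernel-verified Lean document; each statement's English description precedes it below -/
import Mathlib

section
/- Under the Gallager parity check ensemble with parameters n and k (1 <= k < n), the transmitted codeword X^n(q) is uniformly distributed over the nonzero vectors of GF(2)^n: for every nonzero x^n in GF(2)^n, Pr{X^n(q) = x^n} = 1/(2^n - 1). -/
open scoped Classical BigOperators
open Finset

noncomputable section

/-- The Gaussian tail function `Q(s) = (1/sqrt(2*pi)) * int_s^infty e^{-x^2/2} dx`. -/
def gaussQ (s : ℝ) : ℝ :=
  (1 / Real.sqrt (2 * Real.pi)) * ∫ x in Set.Ioi s, Real.exp (-x ^ 2 / 2)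

/-- The inverse of the Gaussian tail function (on `(0,1)`). -/
def gaussQinv : ℝ → ℝ := Function.invFun gaussQ

/-- The nonzero vectors in the null space of a parity-check matrix over `GF(2)`. -/
def nullNZ (n k : ℕ) (H : Matrix (Fin (n - k)) (Fin n) (ZMod 2)) :
    Finset (Fin n → ZMod 2) :=
  Finset.univ.filter fun x => Matrix.mulVec H x = 0 ∧ x ≠ 0

/-! Right multiplication `H ↦ H * A` by an invertible matrix permutes the parity-check matrices,
and `v ↦ A v` maps the nonzero null vectors of `H * A` bijectively onto those of `H`. As the
invertible matrices act transitively on nonzero vectors, `Pr{X^n(q) = x}` is the same for every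
nonzero `x`; these `2^n - 1` probabilities sum to `1` because `H` has fewer rows than columns, so
its null space always contains a nonzero codeword. -/

theorem exists_linearEquiv_apply_eq_of_ne_zero {K V : Type*} [DivisionRing K] [AddCommGroup V]
    [Module K V] {x y : V} (hx : x ≠ 0) (hy : y ≠ 0) :
    ∃ g : V ≃ₗ[K] V, g y = x := by
  let f : (K ∙ y) ≃ₗ[K] (K ∙ x) :=
    (LinearEquiv.toSpanNonzeroSingleton K V y hy).symm ≪≫ₗ
      LinearEquiv.toSpanNonzeroSingleton K V x hx
  obtain ⟨g, hg⟩ := Submodule.exists_linearEquiv_restrict_eq f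
  refine ⟨g, ?_⟩
  have h := hg (LinearEquiv.toSpanNonzeroSingleton K V y hy 1)
  simp only [f, LinearEquiv.trans_apply, LinearEquiv.symm_apply_apply] at h
  simpa using h.symm

theorem Matrix.exists_ne_zero_mulVec_eq_zero_of_card_lt {K m n : Type*} [Field K] [Fintype m]
    [Fintype n] (H : Matrix m n K) (h : Fintype.card m < Fintype.card n) :
    ∃ v ≠ 0, H.mulVec v = 0 := by
  have hker : LinearMap.ker H.mulVecLin ≠ ⊥ :=
    LinearMap.ker_ne_bot_of_finrank_lt (by simpa only [Module.finrank_fintype_fun_eq_card])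
  obtain ⟨v, hv, hv0⟩ := (Submodule.ne_bot_iff _).1 hker
  exact ⟨v, hv0, hv⟩

section NullSpace

variable {n k : ℕ}

theorem nullNZ_nonempty (hk : 1 ≤ k) (hkn : k < n) (H : Matrix (Fin (n - k)) (Fin n) (ZMod 2)) :
    (nullNZ n k H).Nonempty := by
  obtain ⟨v, hv0, hv⟩ :=
    H.exists_ne_zero_mulVec_eq_zero_of_card_lt (by simp only [Fintype.card_fin]; omega)
  exact ⟨v, by simpa [nullNZ] using And.intro hv hv0⟩

theorem mem_nullNZ_mul_toMatrix' (H : Matrix (Fin (n - k)) (Fin n) (ZMod 2))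
    (g : (Fin n → ZMod 2) ≃ₗ[ZMod 2] (Fin n → ZMod 2)) (v : Fin n → ZMod 2) :
    v ∈ nullNZ n k (H * LinearMap.toMatrix' g.toLinearMap) ↔ g v ∈ nullNZ n k H := by
  simp only [nullNZ, Finset.mem_filter, Finset.mem_univ, true_and, ← Matrix.mulVec_mulVec,
    LinearMap.toMatrix'_mulVec, LinearEquiv.coe_coe, ne_eq, LinearEquiv.map_eq_zero_iff]

theorem card_nullNZ_mul_toMatrix' (H : Matrix (Fin (n - k)) (Fin n) (ZMod 2))
    (g : (Fin n → ZMod 2) ≃ₗ[ZMod 2] (Fin n → ZMod 2)) :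
    #(nullNZ n k (H * LinearMap.toMatrix' g.toLinearMap)) = #(nullNZ n k H) :=
  Finset.card_equiv g.toEquiv (mem_nullNZ_mul_toMatrix' H g)

theorem bijective_mul_toMatrix' (g : (Fin n → ZMod 2) ≃ₗ[ZMod 2] (Fin n → ZMod 2)) :
    Function.Bijective fun H : Matrix (Fin (n - k)) (Fin n) (ZMod 2) ↦
      H * LinearMap.toMatrix' g.toLinearMap :=
  Function.bijective_iff_has_inverse.2
    ⟨(· * LinearMap.toMatrix' g.symm.toLinearMap),
      fun H ↦ by simp [Matrix.mul_assoc, ← LinearMap.toMatrix'_comp],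
      fun H ↦ by simp [Matrix.mul_assoc, ← LinearMap.toMatrix'_comp]⟩

end NullSpace

/-- `Pr{X^n(q) = x | H}`: given `H`, the lexicographic enumeration makes `X^n(q)` uniform on the
nonzero null-space vectors of `H`. -/
def condCodewordProb (n k : ℕ) (H : Matrix (Fin (n - k)) (Fin n) (ZMod 2))
    (x : Fin n → ZMod 2) : ℝ :=
  if x ∈ nullNZ n k H then 1 / (#(nullNZ n k H) : ℝ) else 0

def codewordProb (n k : ℕ) (x : Fin n → ZMod 2) : ℝ :=
  ∑ H : Matrix (Fin (n - k)) (Fin n) (ZMod 2),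
    (1 / (2 : ℝ) ^ ((n - k) * n)) * condCodewordProb n k H x

section Probability

variable {n k : ℕ}

theorem condCodewordProb_mul_toMatrix' (H : Matrix (Fin (n - k)) (Fin n) (ZMod 2))
    (g : (Fin n → ZMod 2) ≃ₗ[ZMod 2] (Fin n → ZMod 2)) (x : Fin n → ZMod 2) :
    condCodewordProb n k (H * LinearMap.toMatrix' g.toLinearMap) x =
      condCodewordProb n k H (g x) := by
  simp only [condCodewordProb, mem_nullNZ_mul_toMatrix', card_nullNZ_mul_toMatrix']

theorem condCodewordProb_zero (H : Matrix (Fin (n - k)) (Fin n) (ZMod 2)) :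
    condCodewordProb n k H 0 = 0 := by
  simp [condCodewordProb, nullNZ]

theorem sum_condCodewordProb {H : Matrix (Fin (n - k)) (Fin n) (ZMod 2)}
    (hH : (nullNZ n k H).Nonempty) : ∑ x, condCodewordProb n k H x = 1 := by
  have hcard : (#(nullNZ n k H) : ℝ) ≠ 0 := by exact_mod_cast hH.card_pos.ne'
  simp only [condCodewordProb]
  rw [Finset.sum_ite_mem, Finset.univ_inter, Finset.sum_const, nsmul_eq_mul]
  field_simp

theorem codewordProb_apply_linearEquiv (g : (Fin n → ZMod 2) ≃ₗ[ZMod 2] (Fin n → ZMod 2))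
    (x : Fin n → ZMod 2) : codewordProb n k (g x) = codewordProb n k x :=
  Fintype.sum_bijective _ (bijective_mul_toMatrix' g) _ _ fun H ↦ by
    rw [condCodewordProb_mul_toMatrix']

theorem codewordProb_eq_of_ne_zero {x y : Fin n → ZMod 2} (hx : x ≠ 0) (hy : y ≠ 0) :
    codewordProb n k x = codewordProb n k y := by
  obtain ⟨g, rfl⟩ := exists_linearEquiv_apply_eq_of_ne_zero (K := ZMod 2) hx hy
  exact codewordProb_apply_linearEquiv g y

theorem codewordProb_zero : codewordProb n k 0 = 0 := by
  simp [codewordProb, condCodewordProb_zero]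

theorem sum_codewordProb (hk : 1 ≤ k) (hkn : k < n) : ∑ x, codewordProb n k x = 1 := by
  have hcard : Fintype.card (Matrix (Fin (n - k)) (Fin n) (ZMod 2)) = 2 ^ ((n - k) * n) := by
    rw [Fintype.card_congr Matrix.of.symm]
    simp [← pow_mul, mul_comm]
  unfold codewordProb
  rw [Finset.sum_comm]
  simp only [← Finset.mul_sum, sum_condCodewordProb (nullNZ_nonempty hk hkn _), mul_one,
    Finset.sum_const, Finset.card_univ, hcard]
  simp

end Probability

/-- under the Gallager parity-check ensemble with parameters `n`, `k`
(`1 ≤ k < n`), the transmitted codeword `X^n(q)` is uniform over the nonzero vectors of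
`GF(2)^n`.  The parity-check matrix `H` is uniform over all `(n-k) × n` matrices over
`GF(2)`; given `H`, the message `q` is uniform on `{1, ..., 2^{n-rank(H)}-1}` and
`X^n(q)` is the `q`-th null-space vector in lexicographic order, so that given `H` the
codeword `X^n(q)` is uniform over the nonzero null-space vectors of `H`.  Hence for
every nonzero `x`, `Pr{X^n(q) = x}` equals the displayed sum, and the claim is that it
equals `1/(2^n - 1)`. -/
theorem gallager_codeword_uniform (n k : ℕ) (hk : 1 ≤ k) (hkn : k < n)
    (x : Fin n → ZMod 2) (hx : x ≠ 0) :
    (∑ H : Matrix (Fin (n - k)) (Fin n) (ZMod 2),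
        (1 / (2 : ℝ) ^ ((n - k) * n)) *
          (if x ∈ nullNZ n k H then 1 / ((nullNZ n k H).card : ℝ) else 0)) =
      1 / ((2 : ℝ) ^ n - 1) := by
  change codewordProb n k x = 1 / ((2 : ℝ) ^ n - 1)
  have hconst : ∀ y ∈ Finset.univ.erase 0, codewordProb n k y = codewordProb n k x :=
    fun y hy ↦ codewordProb_eq_of_ne_zero (Finset.ne_of_mem_erase hy) hx
  refine eq_one_div_of_mul_eq_one_right ?_
  calc ((2 : ℝ) ^ n - 1) * codewordProb n k x
      = ∑ y ∈ Finset.univ.erase 0, codewordProb n k y := by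
        rw [Finset.sum_congr rfl hconst, Finset.sum_const,
          Finset.card_erase_of_mem (Finset.mem_univ _), Finset.card_univ, nsmul_eq_mul]
        simp [Nat.cast_sub Nat.one_le_two_pow]
    _ = ∑ y, codewordProb n k y := Finset.sum_erase _ codewordProb_zero
    _ = 1 := sum_codewordProb hk hkn
end
end

section
/- (Theorem 3) For every block length n, every type t on X with T^n_t nonempty, every positive integer k, and every delta > 0: P_err(t,n,k,delta) <= P_{t,delta} + e^{-n ( I(t;P) - delta - R ) + n H(t) - ln |T^n_t|}, where R = (k/n) ln 2. -/
open scoped Classical BigOperators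
open Finset

noncomputable section

/-- A discrete memoryless channel with finite input alphabet `X` and finite output
alphabet `Y`: transition probabilities `p x y = p(y|x)` with rows summing to one. -/
structure DIMC (X Y : Type) [Fintype X] [Fintype Y] where
  p : X → Y → ℝ
  p_nonneg : ∀ x y, 0 ≤ p x y
  p_sum : ∀ x, ∑ y, p x y = 1

/-- `t` is a type (an empirical distribution with denominator `n`) on `X`. -/
def IsType {X : Type} [Fintype X] (n : ℕ) (t : X → ℝ) : Prop :=
  (∀ x, 0 ≤ t x) ∧ (∑ x, t x = 1) ∧ ∀ x, ∃ m : ℕ, t x * n = m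

/-- `T^n_t`: the set of sequences of length `n` with empirical distribution `t`. -/
def typeClass {X : Type} [Fintype X] (n : ℕ) (t : X → ℝ) : Finset (Fin n → X) :=
  Finset.univ.filter fun xv =>
    ∀ x, ((Finset.univ.filter fun i => xv i = x).card : ℝ) = (n : ℝ) * t x

/-- Entropy `H(t)` of a distribution on `X` (in nats). -/
def typeEnt {X : Type} [Fintype X] (t : X → ℝ) : ℝ := -∑ x, t x * Real.log (t x)

namespace DIMC

variable {X Y : Type} [Fintype X] [Fintype Y] (W : DIMC X Y)

/-- Output distribution `q_t` induced by input distribution `t`. -/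
def qOut (t : X → ℝ) (y : Y) : ℝ := ∑ x, t x * W.p x y

/-- Mutual information `I(t;P)` (with the convention `0 ln 0 = 0`). -/
def mutInfo (t : X → ℝ) : ℝ :=
  ∑ x, t x * ∑ y, W.p x y * Real.log (W.p x y / W.qOut t y)

/-- The DIMC jar based on type `t`. -/
def dJar (n : ℕ) (t : X → ℝ) (δ : ℝ) (yv : Fin n → Y) : Finset (Fin n → X) :=
  (typeClass n t).filter fun xv =>
    0 < (∏ i, W.p (xv i) (yv i)) ∧
      -(1 / (n : ℝ)) * ∑ i, Real.log (W.p (xv i) (yv i) / W.qOut t (yv i)) <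
        -W.mutInfo t + δ

/-- `P_{t,δ}`, expressed as a function of the transmitted sequence `xv` (it depends on
`xv` only through its type `t`). -/
def Ptd (n : ℕ) (t : X → ℝ) (δ : ℝ) (xv : Fin n → X) : ℝ :=
  ∑ yv : Fin n → Y,
    (∏ i, W.p (xv i) (yv i)) *
      (if -W.mutInfo t + δ ≤
          -(1 / (n : ℝ)) * ∑ i, Real.log (W.p (xv i) (yv i) / W.qOut t (yv i))
        then 1 else 0)

/-- Jar-decoding error probability for the Shannon random code ensemble with fixed
codeword type `t`: the `2^k` codewords are i.i.d. uniform on `T^n_t`, the message is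
uniform, and the channel acts memorylessly. -/
def PerrT (n k : ℕ) (t : X → ℝ) (δ : ℝ) : ℝ :=
  ∑ cb : Fin (2 ^ k) → Fin n → X, ∑ q : Fin (2 ^ k), ∑ yv : Fin n → Y,
    (∏ j, if cb j ∈ typeClass n t then 1 / ((typeClass n t).card : ℝ) else 0) *
      ((1 / (2 ^ k : ℝ)) *
        ((∏ i, W.p (cb q i) (yv i)) *
          (if cb q ∉ W.dJar n t δ yv ∨ ∃ j, cb j ≠ cb q ∧ cb j ∈ W.dJar n t δ yv
            then 1 else 0)))

end DIMC


/-!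
The error event is contained in the union of two events: the sent codeword leaves the jar of
`Y^n`, or some other codeword lies in it. The sent codeword is uniform on `T^n_t` and
`P_{t,δ}` is invariant under permuting coordinates, so the first event has probability exactly
`P_{t,δ}`. Another codeword is independent of `Y^n` and uniform on `T^n_t`, so it falls into the
jar with probability `|J_t(Y^n)| / |T^n_t|`. Weighting each `z ∈ X^n` by `∏ t(z_i) p(y_i|z_i)`,
the weights sum to `∏ q_t(y_i)`, while a jar element has weight
`e^{-n H(t)} ∏ p(y_i|z_i) > e^{-n H(t) + n (I(t;P) - δ)} ∏ q_t(y_i)`; hence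
`|J_t(y^n)| ≤ e^{n H(t) - n (I(t;P) - δ)}`. A union bound over the other `2^k - 1` codewords
finishes the proof.
-/

section ProductWeights

variable {ι A : Type*} [Fintype ι] [DecidableEq ι] [Fintype A]

theorem sum_pi_prod_mul_prod (u : A → ℝ) (g : ι → A → ℝ) :
    ∑ c : ι → A, (∏ i, u (c i)) * ∏ i, g i (c i) = ∏ i, ∑ a, u a * g i a := by
  simp_rw [← Finset.prod_mul_distrib]
  exact (Fintype.prod_sum fun i a => u a * g i a).symm

variable {u : A → ℝ}

theorem sum_pi_prod_mul_apply (hu : ∑ a, u a = 1) (F : A → ℝ) (q : ι) :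
    ∑ c : ι → A, (∏ i, u (c i)) * F (c q) = ∑ a, u a * F a := by
  have h := sum_pi_prod_mul_prod u fun i => if i = q then F else 1
  rw [Fintype.prod_eq_single q fun i hi => by simp [hi, hu], if_pos rfl] at h
  rw [← h]
  refine Finset.sum_congr rfl fun c _ => congrArg _ ?_
  rw [Fintype.prod_eq_single (f := fun i => (if i = q then F else 1) (c i)) q
    fun i hi => by simp [hi], if_pos rfl]

theorem sum_pi_prod_mul_apply_mul_apply (hu : ∑ a, u a = 1) (F G : A → ℝ) {q j : ι}
    (hjq : j ≠ q) :
    ∑ c : ι → A, (∏ i, u (c i)) * (F (c q) * G (c j)) =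
      (∑ a, u a * F a) * ∑ a, u a * G a := by
  have h := sum_pi_prod_mul_prod u fun i => if i = q then F else if i = j then G else 1
  have hne : ∀ i, i ≠ q ∧ i ≠ j → (if i = q then F else if i = j then G else 1) = 1 :=
    fun i hi => by simp [hi.1, hi.2]
  rw [Fintype.prod_eq_mul q j hjq.symm fun i hi => by simp [hne i hi, hu],
    if_pos rfl, if_neg hjq, if_pos rfl] at h
  rw [← h]
  refine Finset.sum_congr rfl fun c _ => congrArg _ ?_
  rw [Fintype.prod_eq_mul (f := fun i => (if i = q then F else if i = j then G else 1) (c i))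
    q j hjq.symm fun i hi => by simp [hne i hi],
    if_pos rfl, if_neg hjq, if_pos rfl]

end ProductWeights

section TypeClass

variable {X : Type} [Fintype X] {n : ℕ} {t : X → ℝ}

def typeClassUniform (n : ℕ) (t : X → ℝ) (z : Fin n → X) : ℝ :=
  if z ∈ typeClass n t then 1 / ((typeClass n t).card : ℝ) else 0

theorem typeClassUniform_nonneg (z : Fin n → X) : 0 ≤ typeClassUniform n t z := by
  unfold typeClassUniform
  positivity

theorem sum_typeClassUniform_mul (F : (Fin n → X) → ℝ) :
    ∑ z, typeClassUniform n t z * F z = (∑ z ∈ typeClass n t, F z) / (typeClass n t).card := by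
  simp [typeClassUniform, ite_mul, div_eq_inv_mul, Finset.mul_sum]

theorem sum_typeClassUniform (hT : (typeClass n t).Nonempty) :
    ∑ z, typeClassUniform n t z = 1 := by
  simpa [hT.card_pos.ne'] using sum_typeClassUniform_mul (n := n) (t := t) fun _ => 1

variable {z : Fin n → X}

theorem card_fiber_of_mem_typeClass (hz : z ∈ typeClass n t) (x : X) :
    ((univ.filter fun i => z i = x).card : ℝ) = n * t x :=
  (mem_filter.1 hz).2 x

theorem pos_of_mem_typeClass (hz : z ∈ typeClass n t) (i : Fin n) : 0 < t (z i) := by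
  have hcard : (0 : ℝ) < n * t (z i) := by
    rw [← card_fiber_of_mem_typeClass hz]
    exact_mod_cast card_pos.2 ⟨i, by simp⟩
  exact pos_of_mul_pos_right hcard n.cast_nonneg

theorem prod_apply_eq_exp_typeEnt (hz : z ∈ typeClass n t) :
    ∏ i, t (z i) = Real.exp (-n * typeEnt t) := by
  have hlog : ∑ i, Real.log (t (z i)) = -n * typeEnt t := by
    rw [← Finset.sum_fiberwise' univ z fun x => Real.log (t x), typeEnt, neg_mul_neg,
      Finset.mul_sum]
    refine Finset.sum_congr rfl fun x _ => ?_
    rw [Finset.sum_const, nsmul_eq_mul, card_fiber_of_mem_typeClass hz, mul_assoc]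
  rw [← hlog, Real.exp_sum]
  exact Finset.prod_congr rfl fun i _ => (Real.exp_log (pos_of_mem_typeClass hz i)).symm

theorem exists_perm_comp_eq_of_mem_typeClass {z' : Fin n → X} (hz : z ∈ typeClass n t)
    (hz' : z' ∈ typeClass n t) : ∃ σ : Equiv.Perm (Fin n), z' ∘ σ = z := by
  have hcard : ∀ x, Fintype.card {i // z i = x} = Fintype.card {i // z' i = x} := fun x => by
    rw [Fintype.card_subtype, Fintype.card_subtype]
    exact_mod_cast (card_fiber_of_mem_typeClass hz x).trans
      (card_fiber_of_mem_typeClass hz' x).symm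
  exact ⟨Equiv.ofFiberEquiv fun x => Fintype.equivOfCardEq (hcard x),
    funext <| Equiv.ofFiberEquiv_map _⟩

end TypeClass

namespace DIMC

variable {X Y : Type} [Fintype X] [Fintype Y] (W : DIMC X Y) {n : ℕ} {t : X → ℝ} {δ : ℝ}

theorem prod_p_nonneg (z : Fin n → X) (yv : Fin n → Y) : 0 ≤ ∏ i, W.p (z i) (yv i) :=
  Finset.prod_nonneg fun _ _ => W.p_nonneg _ _

theorem sum_prod_p (z : Fin n → X) : ∑ yv : Fin n → Y, ∏ i, W.p (z i) (yv i) = 1 := by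
  rw [← Fintype.prod_sum fun i y => W.p (z i) y]
  simp [W.p_sum]

theorem sum_prod_mul_p_eq_prod_qOut (yv : Fin n → Y) :
    ∑ z : Fin n → X, ∏ i, t (z i) * W.p (z i) (yv i) = ∏ i, W.qOut t (yv i) :=
  (Fintype.prod_sum fun i x => t x * W.p x (yv i)).symm

theorem qOut_pos (ht : ∀ x, 0 ≤ t x) {x : X} {y : Y} (htx : 0 < t x) (hp : 0 < W.p x y) :
    0 < W.qOut t y :=
  (mul_pos htx hp).trans_le <|
    Finset.single_le_sum (f := fun x => t x * W.p x y)
      (fun x _ => mul_nonneg (ht x) (W.p_nonneg x y)) (mem_univ x)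

theorem Ptd_comp_perm (xv : Fin n → X) (σ : Equiv.Perm (Fin n)) :
    W.Ptd n t δ (xv ∘ σ) = W.Ptd n t δ xv := by
  refine Fintype.sum_equiv (σ.arrowCongr (Equiv.refl Y)) _ _ fun yv => ?_
  have hp : ∏ i, W.p (xv (σ i)) (yv i) = ∏ i, W.p (xv i) (yv (σ.symm i)) := by
    simpa using Equiv.prod_comp σ fun i => W.p (xv i) (yv (σ.symm i))
  have hlog : ∑ i, Real.log (W.p (xv (σ i)) (yv i) / W.qOut t (yv i)) =
      ∑ i, Real.log (W.p (xv i) (yv (σ.symm i)) / W.qOut t (yv (σ.symm i))) := by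
    simpa using
      Equiv.sum_comp σ fun i => Real.log (W.p (xv i) (yv (σ.symm i)) / W.qOut t (yv (σ.symm i)))
  simp [hp, hlog]

theorem Ptd_eq_of_mem_typeClass {z xv : Fin n → X} (hz : z ∈ typeClass n t)
    (hxv : xv ∈ typeClass n t) : W.Ptd n t δ z = W.Ptd n t δ xv := by
  obtain ⟨σ, rfl⟩ := exists_perm_comp_eq_of_mem_typeClass hz hxv
  exact W.Ptd_comp_perm xv σ

theorem Ptd_eq_sum_notMem_dJar {z : Fin n → X} (hz : z ∈ typeClass n t) :
    W.Ptd n t δ z = ∑ yv, (∏ i, W.p (z i) (yv i)) * if z ∉ W.dJar n t δ yv then 1 else 0 := by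
  refine Finset.sum_congr rfl fun yv _ => ?_
  rcases (W.prod_p_nonneg z yv).eq_or_lt with h0 | hpos
  · simp [← h0]
  · simp [dJar, hz, hpos]

theorem dJar_subset_typeClass (yv : Fin n → Y) : W.dJar n t δ yv ⊆ typeClass n t :=
  filter_subset _ _

theorem p_pos_of_mem_dJar {yv : Fin n → Y} {z : Fin n → X} (hz : z ∈ W.dJar n t δ yv)
    (i : Fin n) : 0 < W.p (z i) (yv i) :=
  (W.p_nonneg _ _).lt_of_ne' <|
    (Finset.prod_ne_zero_iff.1 (mem_filter.1 hz).2.1.ne' i (mem_univ i))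

theorem qOut_pos_of_mem_dJar (ht : ∀ x, 0 ≤ t x) {yv : Fin n → Y} {z : Fin n → X}
    (hz : z ∈ W.dJar n t δ yv) (i : Fin n) : 0 < W.qOut t (yv i) :=
  W.qOut_pos ht (pos_of_mem_typeClass (W.dJar_subset_typeClass yv hz) i) (W.p_pos_of_mem_dJar hz i)

theorem lt_sum_log_of_mem_dJar (hn : 0 < n) {yv : Fin n → Y} {z : Fin n → X}
    (hz : z ∈ W.dJar n t δ yv) :
    n * (W.mutInfo t - δ) < ∑ i, Real.log (W.p (z i) (yv i) / W.qOut t (yv i)) := by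
  have h := (mem_filter.1 hz).2.2
  rw [neg_mul, one_div, inv_mul_eq_div, neg_lt, neg_add, neg_neg,
    lt_div_iff₀ (Nat.cast_pos.2 hn)] at h
  linarith

theorem exp_mul_prod_qOut_lt_of_mem_dJar (hn : 0 < n) (ht : ∀ x, 0 ≤ t x) {yv : Fin n → Y}
    {z : Fin n → X} (hz : z ∈ W.dJar n t δ yv) :
    Real.exp (n * (W.mutInfo t - δ)) * ∏ i, W.qOut t (yv i) < ∏ i, W.p (z i) (yv i) := by
  have hp := W.p_pos_of_mem_dJar hz
  have hq := W.qOut_pos_of_mem_dJar ht hz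
  have hQ : 0 < ∏ i, W.qOut t (yv i) := Finset.prod_pos fun i _ => hq i
  have h := W.lt_sum_log_of_mem_dJar hn hz
  rw [← Real.log_prod fun i _ => (div_pos (hp i) (hq i)).ne', Finset.prod_div_distrib,
    Real.lt_log_iff_exp_lt (div_pos (Finset.prod_pos fun i _ => hp i) hQ),
    lt_div_iff₀ hQ] at h
  exact h

theorem card_dJar_le (hn : 0 < n) (ht : ∀ x, 0 ≤ t x) (yv : Fin n → Y) :
    ((W.dJar n t δ yv).card : ℝ) ≤ Real.exp (n * typeEnt t - n * (W.mutInfo t - δ)) := by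
  rcases (W.dJar n t δ yv).eq_empty_or_nonempty with hJ | ⟨z₀, hz₀⟩
  · simp only [hJ, card_empty, Nat.cast_zero]
    positivity
  have hQ : 0 < ∏ i, W.qOut t (yv i) :=
    Finset.prod_pos fun i _ => W.qOut_pos_of_mem_dJar ht hz₀ i
  have hc : Real.exp (-n * typeEnt t) * Real.exp (n * (W.mutInfo t - δ)) =
      Real.exp (-(n * typeEnt t - n * (W.mutInfo t - δ))) := by
    rw [← Real.exp_add]; ring_nf
  have hweight : ∀ z ∈ W.dJar n t δ yv,
      Real.exp (-(n * typeEnt t - n * (W.mutInfo t - δ))) * ∏ i, W.qOut t (yv i) ≤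
        ∏ i, t (z i) * W.p (z i) (yv i) := by
    intro z hz
    rw [Finset.prod_mul_distrib, prod_apply_eq_exp_typeEnt (W.dJar_subset_typeClass yv hz), ← hc,
      mul_assoc]
    exact mul_le_mul_of_nonneg_left (W.exp_mul_prod_qOut_lt_of_mem_dJar hn ht hz).le
      (Real.exp_pos _).le
  have hsum := (card_nsmul_le_sum _ _ _ hweight).trans <|
    sum_le_sum_of_subset_of_nonneg (subset_univ _) fun z _ _ =>
      Finset.prod_nonneg fun i _ => mul_nonneg (ht (z i)) (W.p_nonneg _ (yv i))
  rw [W.sum_prod_mul_p_eq_prod_qOut yv, nsmul_eq_mul, ← mul_assoc] at hsum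
  rwa [mul_le_iff_le_one_left hQ, Real.exp_neg, ← div_eq_mul_inv,
    div_le_one (Real.exp_pos _)] at hsum

variable {ι : Type} [Fintype ι] [DecidableEq ι]

theorem sum_codebook_notMem_dJar {xv : Fin n → X} (hxv : xv ∈ typeClass n t) (q : ι) :
    ∑ cb : ι → Fin n → X, (∏ j, typeClassUniform n t (cb j)) *
        ∑ yv, (∏ i, W.p (cb q i) (yv i)) * (if cb q ∉ W.dJar n t δ yv then 1 else 0) =
      W.Ptd n t δ xv := by
  rw [sum_pi_prod_mul_apply (sum_typeClassUniform ⟨xv, hxv⟩) (fun z => ∑ yv,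
      (∏ i, W.p (z i) (yv i)) * (if z ∉ W.dJar n t δ yv then 1 else 0)) q,
    sum_typeClassUniform_mul, Finset.sum_congr rfl fun z hz =>
      (W.Ptd_eq_sum_notMem_dJar hz).symm.trans (W.Ptd_eq_of_mem_typeClass hz hxv),
    sum_const, nsmul_eq_mul, mul_div_cancel_left₀ _ (Nat.cast_ne_zero.2 (card_pos.2 ⟨xv, hxv⟩).ne')]

theorem sum_typeClassUniform_mem_dJar_le (hn : 0 < n) (ht : ∀ x, 0 ≤ t x) (yv : Fin n → Y) :
    ∑ z, typeClassUniform n t z * (if z ∈ W.dJar n t δ yv then 1 else 0) ≤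
      Real.exp (n * typeEnt t - n * (W.mutInfo t - δ)) / (typeClass n t).card := by
  rw [sum_typeClassUniform_mul, sum_boole, filter_mem_eq_inter,
    inter_eq_right.2 (W.dJar_subset_typeClass yv)]
  gcongr
  exact W.card_dJar_le hn ht yv

theorem sum_codebook_mem_dJar_le (hn : 0 < n) (ht : ∀ x, 0 ≤ t x)
    (hT : (typeClass n t).Nonempty) {q j : ι} (hjq : j ≠ q) :
    ∑ cb : ι → Fin n → X, (∏ j', typeClassUniform n t (cb j')) *
        ∑ yv, (∏ i, W.p (cb q i) (yv i)) * (if cb j ∈ W.dJar n t δ yv then 1 else 0) ≤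
      Real.exp (n * typeEnt t - n * (W.mutInfo t - δ)) / (typeClass n t).card := by
  set B := Real.exp (n * typeEnt t - n * (W.mutInfo t - δ)) / (typeClass n t).card
  have hu := sum_typeClassUniform hT
  calc _ = ∑ yv : Fin n → Y, (∑ z, typeClassUniform n t z * ∏ i, W.p (z i) (yv i)) *
        ∑ z, typeClassUniform n t z * (if z ∈ W.dJar n t δ yv then 1 else 0) := by
        conv_lhs => simp only [Finset.mul_sum]
        rw [Finset.sum_comm]
        exact Finset.sum_congr rfl fun yv _ => sum_pi_prod_mul_apply_mul_apply hu
          (fun z => ∏ i, W.p (z i) (yv i)) (fun z => if z ∈ W.dJar n t δ yv then (1 : ℝ) else 0) hjq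
    _ ≤ ∑ yv : Fin n → Y, (∑ z, typeClassUniform n t z * ∏ i, W.p (z i) (yv i)) * B :=
        Finset.sum_le_sum fun yv _ => mul_le_mul_of_nonneg_left
          (W.sum_typeClassUniform_mem_dJar_le hn ht yv) (Finset.sum_nonneg fun z _ =>
            mul_nonneg (typeClassUniform_nonneg z) (W.prod_p_nonneg z yv))
    _ = B := by
        rw [← Finset.sum_mul, Finset.sum_comm]
        simp_rw [← Finset.mul_sum, sum_prod_p, mul_one, hu, one_mul]

theorem ite_decodingError_le (cb : ι → Fin n → X) (q : ι) (yv : Fin n → Y) :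
    (if cb q ∉ W.dJar n t δ yv ∨ ∃ j, cb j ≠ cb q ∧ cb j ∈ W.dJar n t δ yv then (1 : ℝ)
      else 0) ≤
      (if cb q ∉ W.dJar n t δ yv then 1 else 0) +
        ∑ j ∈ univ.erase q, if cb j ∈ W.dJar n t δ yv then 1 else 0 := by
  have hterm : ∀ j, 0 ≤ if cb j ∈ W.dJar n t δ yv then (1 : ℝ) else 0 := fun j => by
    positivity
  have hsum := sum_nonneg fun j (_ : j ∈ univ.erase q) => hterm j
  by_cases hq : cb q ∈ W.dJar n t δ yv
  · rw [if_neg (not_not_intro hq), zero_add]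
    split_ifs with herr
    · obtain ⟨j, hne, hj⟩ := herr.resolve_left (not_not_intro hq)
      have hjq : j ∈ univ.erase q := mem_erase.2 ⟨fun h => hne (h ▸ rfl), mem_univ j⟩
      simpa [hj] using single_le_sum (fun j _ => hterm j) hjq
    · exact hsum
  · rw [if_pos (Or.inl hq), if_pos hq]
    linarith

theorem sum_codebook_error_le (hn : 0 < n) (ht : ∀ x, 0 ≤ t x) {xv : Fin n → X}
    (hxv : xv ∈ typeClass n t) (q : ι) :
    ∑ cb : ι → Fin n → X, (∏ j, typeClassUniform n t (cb j)) *
        ∑ yv, (∏ i, W.p (cb q i) (yv i)) *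
          (if cb q ∉ W.dJar n t δ yv ∨ ∃ j, cb j ≠ cb q ∧ cb j ∈ W.dJar n t δ yv then 1
            else 0) ≤
      W.Ptd n t δ xv + Fintype.card ι *
        (Real.exp (n * typeEnt t - n * (W.mutInfo t - δ)) / (typeClass n t).card) := by
  calc _ ≤ ∑ cb : ι → Fin n → X, (∏ j, typeClassUniform n t (cb j)) *
        ∑ yv, (∏ i, W.p (cb q i) (yv i)) * ((if cb q ∉ W.dJar n t δ yv then 1 else 0) +
          ∑ j ∈ univ.erase q, if cb j ∈ W.dJar n t δ yv then 1 else 0) := by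
        gcongr with cb _ yv _
        · exact prod_nonneg fun j _ => typeClassUniform_nonneg (cb j)
        · exact W.prod_p_nonneg (cb q) yv
        · exact W.ite_decodingError_le cb q yv
    _ = W.Ptd n t δ xv + ∑ j ∈ univ.erase q, ∑ cb : ι → Fin n → X,
          (∏ j', typeClassUniform n t (cb j')) *
            ∑ yv, (∏ i, W.p (cb q i) (yv i)) * (if cb j ∈ W.dJar n t δ yv then 1 else 0) := by
        rw [← W.sum_codebook_notMem_dJar hxv q]
        simp only [mul_add, Finset.mul_sum, Finset.sum_add_distrib]
        exact congrArg _ <| (Finset.sum_congr rfl fun cb _ => Finset.sum_comm).trans Finset.sum_comm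
    _ ≤ W.Ptd n t δ xv + ∑ j ∈ univ.erase q,
          Real.exp (n * typeEnt t - n * (W.mutInfo t - δ)) / (typeClass n t).card := by
        gcongr with j hj
        exact W.sum_codebook_mem_dJar_le hn ht ⟨xv, hxv⟩ (ne_of_mem_erase hj)
    _ ≤ _ := by
        rw [sum_const, nsmul_eq_mul]
        gcongr
        exact_mod_cast card_erase_le

theorem PerrT_eq (n k : ℕ) (t : X → ℝ) (δ : ℝ) :
    W.PerrT n k t δ = 1 / 2 ^ k * ∑ q : Fin (2 ^ k), ∑ cb : Fin (2 ^ k) → Fin n → X,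
      (∏ j, typeClassUniform n t (cb j)) * ∑ yv, (∏ i, W.p (cb q i) (yv i)) *
        (if cb q ∉ W.dJar n t δ yv ∨ ∃ j, cb j ≠ cb q ∧ cb j ∈ W.dJar n t δ yv then 1
          else 0) := by
  simp only [PerrT, typeClassUniform, Finset.mul_sum]
  rw [Finset.sum_comm]
  refine Finset.sum_congr rfl fun q _ => Finset.sum_congr rfl fun cb _ =>
    Finset.sum_congr rfl fun yv _ => by ring

theorem PerrT_le (hn : 0 < n) (ht : ∀ x, 0 ≤ t x) {xv : Fin n → X}
    (hxv : xv ∈ typeClass n t) (k : ℕ) :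
    W.PerrT n k t δ ≤ W.Ptd n t δ xv +
      2 ^ k * (Real.exp (n * typeEnt t - n * (W.mutInfo t - δ)) / (typeClass n t).card) := by
  rw [PerrT_eq]
  calc _ ≤ 1 / 2 ^ k * ∑ q : Fin (2 ^ k), (W.Ptd n t δ xv + 2 ^ k *
        (Real.exp (n * typeEnt t - n * (W.mutInfo t - δ)) / (typeClass n t).card)) := by
        gcongr with q
        simpa using W.sum_codebook_error_le hn ht hxv q
    _ = _ := by
        rw [sum_const, card_univ, Fintype.card_fin, nsmul_eq_mul]
        field_simp
        push_cast
        ring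

end DIMC

theorem fixed_type_error_bound_general {X Y : Type} [Fintype X] [Fintype Y] (W : DIMC X Y)
    (n : ℕ) (hn : 0 < n) (t : X → ℝ) (ht : IsType n t)
    (k : ℕ) (δ : ℝ)
    (xv : Fin n → X) (hxv : xv ∈ typeClass n t) :
    W.PerrT n k t δ ≤
      W.Ptd n t δ xv +
        Real.exp (-(n : ℝ) * (W.mutInfo t - δ - (k : ℝ) / n * Real.log 2) +
          (n : ℝ) * typeEnt t - Real.log ((typeClass n t).card : ℝ)) := by
  refine (W.PerrT_le hn ht.1 hxv k).trans_eq ?_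
  have hT : (0 : ℝ) < (typeClass n t).card := Nat.cast_pos.2 (card_pos.2 ⟨xv, hxv⟩)
  have hrate : -(n : ℝ) * (W.mutInfo t - δ - k / n * Real.log 2) + n * typeEnt t =
      k * Real.log 2 + (n * typeEnt t - n * (W.mutInfo t - δ)) := by
    field_simp
    ring
  rw [hrate, Real.exp_sub (k * Real.log 2 + _), Real.exp_add (k * Real.log 2), Real.exp_log hT,
    Real.exp_nat_mul, Real.exp_log two_pos, mul_div_assoc]

/-- Theorem 3: for every block length `n`, every type `t` with `T^n_t`
nonempty, every positive integer `k` and every `δ > 0`,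
`P_err(t,n,k,δ) ≤ P_{t,δ} + e^{-n (I(t;P) - δ - R) + n H(t) - ln |T^n_t|}`
where `R = (k/n) ln 2`. -/
theorem fixed_type_error_bound {X Y : Type} [Fintype X] [Fintype Y] (W : DIMC X Y)
    (n : ℕ) (hn : 0 < n) (t : X → ℝ) (ht : IsType n t)
    (hT : (typeClass n t).Nonempty) (k : ℕ) (hk : 1 ≤ k) (δ : ℝ) (hδ : 0 < δ)
    (xv : Fin n → X) (hxv : xv ∈ typeClass n t) :
    W.PerrT n k t δ ≤
      W.Ptd n t δ xv +
        Real.exp (-(n : ℝ) * (W.mutInfo t - δ - (k : ℝ) / n * Real.log 2) +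
          (n : ℝ) * typeEnt t - Real.log ((typeClass n t).card : ℝ)) :=
  fixed_type_error_bound_general W n hn t ht k δ xv hxv
end
end

section
/- (NEP with respect to conditional entropy, Chernoff part) For every positive integer n and every delta >= 0: Pr{ -(1/n) sum_{i=1}^n ln p(X_i|Y_i) > H(X|Y) + delta } <= e^{-n r(delta)}. -/
open scoped Classical BigOperators
open Finset

noncomputable section

/-- A joint pmf on finite alphabets `X` and `Y`, with all probabilities positive. -/
structure JointPMF (X Y : Type) [Fintype X] [Fintype Y] where
  p : X → Y → ℝ
  p_pos : ∀ x y, 0 < p x y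
  p_sum : ∑ x, ∑ y, p x y = 1

namespace JointPMF

variable {X Y : Type} [Fintype X] [Fintype Y] (P : JointPMF X Y)

/-- Marginal `p(y)`. -/
def pY (y : Y) : ℝ := ∑ x, P.p x y

/-- Conditional pmf `p(x|y)`. -/
def pXY (x : X) (y : Y) : ℝ := P.p x y / P.pY y

/-- Conditional entropy `H(X|Y)` (in nats). -/
def condEnt : ℝ := ∑ x, ∑ y, P.p x y * (-Real.log (P.pXY x y))

/-- `Pr{ -(1/n) sum_i ln p(X_i|Y_i) > H(X|Y) + δ }` for `n` i.i.d. copies of `(X,Y)`. -/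
def tailProb (n : ℕ) (δ : ℝ) : ℝ :=
  ∑ xv : Fin n → X, ∑ yv : Fin n → Y,
    (∏ i, P.p (xv i) (yv i)) *
      (if P.condEnt + δ < -(1 / (n : ℝ)) * ∑ i, Real.log (P.pXY (xv i) (yv i))
        then 1 else 0)

/-- `ln sum_{x,y} p(y) p(x|y)^{1-λ}`. -/
def tiltLogSum (lam : ℝ) : ℝ :=
  Real.log (∑ x, ∑ y, P.pY y * P.pXY x y ^ (1 - lam))

/-- The rate function `r(δ)`. -/
def rFun (δ : ℝ) : ℝ :=
  sSup ((fun lam => lam * (P.condEnt + δ) - P.tiltLogSum lam) '' Set.Ici 0)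

/-- The tilting factor `f_λ(x,y)`. -/
def fLam (lam : ℝ) (x : X) (y : Y) : ℝ :=
  P.pXY x y ^ (-lam) / ∑ u, ∑ v, P.pY v * P.pXY u v ^ (1 - lam)

/-- `δ(λ)`. -/
def deltaLam (lam : ℝ) : ℝ :=
  (∑ x, ∑ y, P.p x y * (P.fLam lam x y * (-Real.log (P.pXY x y)))) - P.condEnt

/-- `σ²(λ)`. -/
def sigmaSq (lam : ℝ) : ℝ :=
  ∑ x, ∑ y,
    P.fLam lam x y * (P.pY y * (P.pXY x y *
      |(-Real.log (P.pXY x y)) - (P.condEnt + P.deltaLam lam)| ^ 2))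

/-- `M(λ)`. -/
def Mthird (lam : ℝ) : ℝ :=
  ∑ x, ∑ y,
    P.fLam lam x y * (P.pY y * (P.pXY x y *
      |(-Real.log (P.pXY x y)) - (P.condEnt + P.deltaLam lam)| ^ 3))

/-- `σ² = sum_{x,y} p(x,y) (-ln p(x|y) - H(X|Y))²`. -/
def sigma0 : ℝ :=
  ∑ x, ∑ y, P.p x y * ((-Real.log (P.pXY x y)) - P.condEnt) ^ 2

/-- `M = sum_{x,y} p(x,y) |-ln p(x|y) - H(X|Y)|³`. -/
def M0 : ℝ :=
  ∑ x, ∑ y, P.p x y * |(-Real.log (P.pXY x y)) - P.condEnt| ^ 3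

/-- `ξ̄(λ,n)` with the Berry-Esseen constant `C = 0.4784`. -/
def xiBar (lam : ℝ) (n : ℕ) : ℝ :=
  2 * 0.4784 * P.Mthird lam / (Real.sqrt n * Real.sqrt (P.sigmaSq lam) ^ 3) +
    Real.exp ((n : ℝ) * lam ^ 2 * P.sigmaSq lam / 2) *
      (gaussQ (Real.sqrt n * lam * Real.sqrt (P.sigmaSq lam)) -
        gaussQ
          (gaussQinv
              (0.4784 * P.Mthird lam /
                (Real.sqrt n * Real.sqrt (P.sigmaSq lam) ^ 3)) +
            Real.sqrt n * lam * Real.sqrt (P.sigmaSq lam)))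

/-- `ξ̲(λ,n)` with the Berry-Esseen constant `C = 0.4784`. -/
def xiUnder (lam : ℝ) (n : ℕ) : ℝ :=
  Real.exp ((n : ℝ) * lam ^ 2 * P.sigmaSq lam / 2) *
    gaussQ
      (gaussQinv
          (1 / 2 - 2 * 0.4784 * P.Mthird lam /
            (Real.sqrt n * Real.sqrt (P.sigmaSq lam) ^ 3)) +
        Real.sqrt n * lam * Real.sqrt (P.sigmaSq lam))

end JointPMF

/-! Chernoff's bound. For `λ ≥ 0` the indicator of `∑ᵢ -ln p(xᵢ|yᵢ) > n (H(X|Y) + δ)` is at most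
`exp (λ (∑ᵢ -ln p(xᵢ|yᵢ) - n (H(X|Y) + δ)))`; its expectation under the product measure factorises
into `exp (-λ n (H(X|Y) + δ)) (∑ p(y) p(x|y)^(1-λ))^n`. Taking the infimum over `λ` gives `e^{-n r(δ)}`;
when the tail probability `t` is positive, the exponents are bounded by `-ln t / n`, so `r(δ)` is a
genuine supremum and not the junk value of `sSup` on a set unbounded above. -/

open Real

theorem le_exp_neg_mul_sSup {S : Set ℝ} {t c : ℝ} (hS : S.Nonempty) (hc : 0 < c)
    (h : ∀ s ∈ S, t ≤ exp (-c * s)) : t ≤ exp (-c * sSup S) := by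
  rcases le_or_gt t 0 with ht | ht
  · exact ht.trans (exp_pos _).le
  have hbound : ∀ s ∈ S, s ≤ -log t / c := fun s hs => by
    rw [le_div_iff₀ hc]
    linarith [(log_le_iff_le_exp ht).2 (h s hs)]
  have hsup : sSup S ≤ -log t / c := csSup_le hS hbound
  rw [← log_le_iff_le_exp ht]
  rw [le_div_iff₀ hc] at hsup
  linarith

theorem sum_pi_prod_mul_ite_lt_le_exp_mul_pow {α : Type*} [Fintype α] (n : ℕ) {w : α → ℝ}
    (hw : ∀ a, 0 ≤ w a) (f : α → ℝ) (c : ℝ) {lam : ℝ} (hlam : 0 ≤ lam) :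
    ∑ v : Fin n → α, (∏ i, w (v i)) * (if c < ∑ i, f (v i) then 1 else 0) ≤
      exp (-(lam * c)) * (∑ a, w a * exp (lam * f a)) ^ n := by
  rw [Fintype.sum_pow, mul_sum]
  refine sum_le_sum fun v _ => ?_
  have hind : (if c < ∑ i, f (v i) then (1 : ℝ) else 0) ≤ exp (lam * (∑ i, f (v i) - c)) := by
    split_ifs with hlt
    · exact one_le_exp (mul_nonneg hlam (sub_nonneg.2 hlt.le))
    · exact (exp_pos _).le
  calc (∏ i, w (v i)) * (if c < ∑ i, f (v i) then 1 else 0)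
      ≤ (∏ i, w (v i)) * exp (lam * (∑ i, f (v i) - c)) :=
        mul_le_mul_of_nonneg_left hind (prod_nonneg fun i _ => hw _)
    _ = exp (-(lam * c)) * ∏ i, w (v i) * exp (lam * f (v i)) := by
        rw [prod_mul_distrib, ← exp_sum, ← mul_sum, mul_sub, sub_eq_neg_add, exp_add]
        ring

namespace JointPMF

variable {X Y : Type} [Fintype X] [Fintype Y] (P : JointPMF X Y)

lemma nonempty_prod (P : JointPMF X Y) : Nonempty (X × Y) := by
  by_contra h
  rw [not_nonempty_iff] at h
  simpa [← Fintype.sum_prod_type'] using P.p_sum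

lemma pY_pos (y : Y) : 0 < P.pY y :=
  have := P.nonempty_prod.map Prod.fst
  sum_pos (fun x _ => P.p_pos x y) univ_nonempty

lemma pXY_pos (x : X) (y : Y) : 0 < P.pXY x y :=
  div_pos (P.p_pos x y) (P.pY_pos y)

lemma pY_mul_pXY (x : X) (y : Y) : P.pY y * P.pXY x y = P.p x y :=
  mul_div_cancel₀ _ (P.pY_pos y).ne'

lemma sum_p_mul_exp_eq_exp_tiltLogSum (lam : ℝ) :
    ∑ z : X × Y, P.p z.1 z.2 * exp (lam * -log (P.pXY z.1 z.2)) = exp (P.tiltLogSum lam) := by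
  have hterm (x : X) (y : Y) :
      P.p x y * exp (lam * -log (P.pXY x y)) = P.pY y * P.pXY x y ^ (1 - lam) := by
    rw [← P.pY_mul_pXY, rpow_sub (P.pXY_pos x y), rpow_one, rpow_def_of_pos (P.pXY_pos x y),
      div_eq_mul_inv, ← exp_neg, mul_assoc, mul_neg, mul_comm lam]
  have hsum : ∑ z : X × Y, P.p z.1 z.2 * exp (lam * -log (P.pXY z.1 z.2)) =
      ∑ x, ∑ y, P.pY y * P.pXY x y ^ (1 - lam) := by
    rw [Fintype.sum_prod_type' (fun x y => P.p x y * exp (lam * -log (P.pXY x y)))]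
    simp_rw [hterm]
  have := P.nonempty_prod
  have hpos : 0 < ∑ x, ∑ y, P.pY y * P.pXY x y ^ (1 - lam) :=
    hsum ▸ sum_pos (fun z _ => mul_pos (P.p_pos _ _) (exp_pos _)) univ_nonempty
  rw [tiltLogSum, exp_log hpos, hsum]

lemma tailProb_eq_sum_pi {n : ℕ} (hn : 0 < n) (δ : ℝ) :
    P.tailProb n δ = ∑ v : Fin n → X × Y, (∏ i, P.p (v i).1 (v i).2) *
      if n * (P.condEnt + δ) < ∑ i, -log (P.pXY (v i).1 (v i).2) then 1 else 0 := by
  rw [tailProb, ← Fintype.sum_prod_type',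
    ← (Equiv.arrowProdEquivProdArrow (Fin n) (fun _ => X) (fun _ => Y)).symm.sum_comp]
  refine sum_congr rfl fun v _ => congrArg _ (if_congr ?_ rfl rfl)
  have hn' : (0 : ℝ) < n := by exact_mod_cast hn
  rw [sum_neg_distrib, ← lt_div_iff₀' hn', neg_div, neg_mul, one_div_mul_eq_div]
  rfl

theorem tailProb_le_exp_neg_mul {n : ℕ} (hn : 0 < n) (δ : ℝ) {lam : ℝ} (hlam : 0 ≤ lam) :
    P.tailProb n δ ≤ exp (-n * (lam * (P.condEnt + δ) - P.tiltLogSum lam)) := by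
  rw [P.tailProb_eq_sum_pi hn]
  refine (sum_pi_prod_mul_ite_lt_le_exp_mul_pow n (w := fun z : X × Y => P.p z.1 z.2)
    (fun z => (P.p_pos z.1 z.2).le) (fun z => -log (P.pXY z.1 z.2)) (n * (P.condEnt + δ))
    hlam).trans_eq ?_
  rw [P.sum_p_mul_exp_eq_exp_tiltLogSum, ← exp_nat_mul, ← exp_add]
  congr 1
  ring

end JointPMF

theorem nep_condEnt_chernoff_general {X Y : Type} [Fintype X] [Fintype Y] (P : JointPMF X Y)
    (n : ℕ) (hn : 0 < n) (δ : ℝ) :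
    P.tailProb n δ ≤ Real.exp (-(n : ℝ) * P.rFun δ) := by
  refine le_exp_neg_mul_sSup (Set.nonempty_Ici.image _) (by exact_mod_cast hn) ?_
  rintro _ ⟨lam, hlam, rfl⟩
  exact P.tailProb_le_exp_neg_mul hn δ hlam

/-- NEP w.r.t. conditional entropy, Chernoff part: for every positive
`n` and every `δ ≥ 0`,
`Pr{ -(1/n) sum_i ln p(X_i|Y_i) > H(X|Y) + δ } ≤ e^{-n r(δ)}`. -/
theorem nep_condEnt_chernoff {X Y : Type} [Fintype X] [Fintype Y] (P : JointPMF X Y)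
    (n : ℕ) (hn : 0 < n) (δ : ℝ) (hδ : 0 ≤ δ) :
    P.tailProb n δ ≤ Real.exp (-(n : ℝ) * P.rFun δ) :=
  nep_condEnt_chernoff_general P n hn δ
end
end
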